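/- For even m, the EMD-Bordawise distance between the normalized Borda vectors of identity and uniformity is (1/12)·m(m²−1); between uniformity and stratification it is (1/16)·m²(m−1); and between identity and stratification it is (1/48)·m(m²+3m−4). -/
import Mathlib


open Finset

noncomputable section
open scoped Classical

/-- Prefix-sum vector. -/
def prefixSum {n : ℕ} (x : Fin n → ℝ) (i : Fin n) : ℝ :=
  ∑ j ∈ Finset.univ.filter (fun j => j ≤ i), x j

/-- EMD-Bordawise distance between (sorted nonincreasing) vectors: the earth
mover's distance, i.e., the ℓ1 distance between their prefix-sum vectors. -/
def dBorda {m : ℕ} (x y : Fin m → ℝ) : ℝ :=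
  ∑ i, |prefixSum x i - prefixSum y i|

/-- Normalized Borda score vector of identity: (m−1, m−2, ..., 1, 0). -/
def bID (m : ℕ) : Fin m → ℝ := fun i => (m : ℝ) - 1 - (i : ℕ)

/-- Normalized Borda score vector of uniformity (and antagonism). -/
def bUN (m : ℕ) : Fin m → ℝ := fun _ => ((m : ℝ) - 1) / 2

/-- Normalized Borda score vector of stratification. -/
def bST (m : ℕ) : Fin m → ℝ := fun i =>
  if (i : ℕ) < m / 2 then 3 * ((m : ℝ) - 1) / 4 else ((m : ℝ) - 1) / 4

/- ### Auxiliary machinery -/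

def gID (m : ℕ) : ℕ → ℝ := fun t => (m : ℝ) - 1 - t
def gUN (m : ℕ) : ℕ → ℝ := fun _ => ((m : ℝ) - 1) / 2
def gST (m k : ℕ) : ℕ → ℝ := fun t =>
  if t < k then 3 * ((m : ℝ) - 1) / 4 else ((m : ℝ) - 1) / 4

lemma sumId (n : ℕ) : ∑ t ∈ range n, (t : ℝ) = n * (n - 1) / 2 := by
  induction n with
  | zero => simp
  | succ n ih => rw [Finset.sum_range_succ, ih]; push_cast; ring

lemma sum_quad (a b c : ℝ) (n : ℕ) :
    ∑ t ∈ range n, (a * (t : ℝ) ^ 2 + b * t + c)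
      = a * ((n : ℝ) * (n - 1) * (2 * n - 1) / 6) + b * ((n : ℝ) * (n - 1) / 2) + c * n := by
  induction n with
  | zero => simp
  | succ n ih => rw [Finset.sum_range_succ, ih]; push_cast; ring

lemma prefixSum_eq {m : ℕ} (x : Fin m → ℝ) (g : ℕ → ℝ) (h : ∀ j : Fin m, x j = g j.val)
    (i : Fin m) : prefixSum x i = ∑ t ∈ range (i.val + 1), g t := by
  unfold prefixSum
  rw [Finset.sum_filter]
  calc ∑ j : Fin m, (if j ≤ i then x j else 0)
      = ∑ j : Fin m, (fun t => if t ≤ i.val then g t else 0) j.val := by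
        refine Finset.sum_congr rfl fun j _ => ?_
        simp only [Fin.le_def, h j]
    _ = ∑ t ∈ range m, (if t ≤ i.val then g t else 0) :=
        Fin.sum_univ_eq_sum_range (fun t => if t ≤ i.val then g t else 0) m
    _ = ∑ t ∈ range (i.val + 1), (if t ≤ i.val then g t else 0) := by
        symm
        refine Finset.sum_subset (Finset.range_subset_range.2 i.isLt) fun t ht hnt => ?_
        have : ¬ t ≤ i.val := fun hle => hnt (Finset.mem_range.2 (Nat.lt_succ_of_le hle))
        simp [this]
    _ = ∑ t ∈ range (i.val + 1), g t := by
        refine Finset.sum_congr rfl fun t ht => ?_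
        rw [if_pos (Nat.lt_succ_iff.1 (Finset.mem_range.1 ht))]

lemma dBorda_eq' {m : ℕ} (x y : Fin m → ℝ) (g h : ℕ → ℝ)
    (hx : ∀ j : Fin m, x j = g j.val) (hy : ∀ j : Fin m, y j = h j.val) :
    dBorda x y = ∑ n ∈ range m, |(∑ t ∈ range (n + 1), g t) - ∑ t ∈ range (n + 1), h t| := by
  unfold dBorda
  rw [← Fin.sum_univ_eq_sum_range
    (fun n => |(∑ t ∈ range (n + 1), g t) - ∑ t ∈ range (n + 1), h t|) m]
  exact Finset.sum_congr rfl fun i _ => by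
    rw [prefixSum_eq x g hx i, prefixSum_eq y h hy i]

lemma pID (m n : ℕ) :
    ∑ t ∈ range (n + 1), gID m t = ((n : ℝ) + 1) * ((m : ℝ) - 1) - (n : ℝ) * ((n : ℝ) + 1) / 2 := by
  simp only [gID]
  rw [Finset.sum_sub_distrib, Finset.sum_const, Finset.card_range, nsmul_eq_mul, sumId]
  push_cast; ring

lemma pUN (m n : ℕ) :
    ∑ t ∈ range (n + 1), gUN m t = ((n : ℝ) + 1) * ((m : ℝ) - 1) / 2 := by
  simp only [gUN]
  rw [Finset.sum_const, Finset.card_range, nsmul_eq_mul]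
  push_cast; ring

lemma pSTlow (m k n : ℕ) (h : n < k) :
    ∑ t ∈ range (n + 1), gST m k t = ((n : ℝ) + 1) * (3 * ((m : ℝ) - 1) / 4) := by
  have hc : ∀ t ∈ range (n + 1), gST m k t = 3 * ((m : ℝ) - 1) / 4 := by
    intro t ht
    exact if_pos (lt_of_lt_of_le (Finset.mem_range.1 ht) h)
  rw [Finset.sum_congr rfl hc, Finset.sum_const, Finset.card_range, nsmul_eq_mul]
  push_cast; ring

lemma pSThigh (m k n : ℕ) :
    ∑ t ∈ range (k + n + 1), gST m k t
      = (k : ℝ) * (3 * ((m : ℝ) - 1) / 4) + ((n : ℝ) + 1) * (((m : ℝ) - 1) / 4) := by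
  have h := Finset.sum_range_add (gST m k) k (n + 1)
  rw [← Nat.add_assoc] at h
  rw [h]
  have h1 : ∀ t ∈ range k, gST m k t = 3 * ((m : ℝ) - 1) / 4 := by
    intro t ht; exact if_pos (Finset.mem_range.1 ht)
  have h2 : ∀ t ∈ range (n + 1), gST m k (k + t) = ((m : ℝ) - 1) / 4 := by
    intro t ht; exact if_neg (by omega)
  rw [Finset.sum_congr rfl h1, Finset.sum_congr rfl h2, Finset.sum_const, Finset.sum_const,
    Finset.card_range, Finset.card_range, nsmul_eq_mul, nsmul_eq_mul]
  push_cast; ring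

/-- For even m: EMD-Bordawise distances between the compass score vectors. -/
theorem stmt13 (m : ℕ) (hm : Even m) :
    dBorda (bID m) (bUN m) = (1 / 12) * (m : ℝ) * ((m : ℝ) ^ 2 - 1) ∧
    dBorda (bUN m) (bST m) = (1 / 16) * (m : ℝ) ^ 2 * ((m : ℝ) - 1) ∧
    dBorda (bID m) (bST m) = (1 / 48) * (m : ℝ) * ((m : ℝ) ^ 2 + 3 * (m : ℝ) - 4) := by
  obtain ⟨k, rfl⟩ := hm
  rcases Nat.eq_zero_or_pos k with rfl | hk
  · refine ⟨?_, ?_, ?_⟩ <;> simp [dBorda]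
  have hxID : ∀ j : Fin (k + k), bID (k + k) j = gID (k + k) j.val := fun j => rfl
  have hxUN : ∀ j : Fin (k + k), bUN (k + k) j = gUN (k + k) j.val := fun j => rfl
  have hxST : ∀ j : Fin (k + k), bST (k + k) j = gST (k + k) k j.val := by
    intro j
    simp only [bST, gST]
    rw [show (k + k) / 2 = k from by omega]
  have hC2 : ((k + k : ℕ) : ℝ) = (k : ℝ) + k := by push_cast; ring
  have hC1 : (1 : ℝ) ≤ ((k + k : ℕ) : ℝ) := by exact_mod_cast Nat.one_le_iff_ne_zero.2 (by omega)
  refine ⟨?_, ?_, ?_⟩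
  · -- ID vs UN
    rw [dBorda_eq' _ _ (gID (k + k)) (gUN (k + k)) hxID hxUN]
    have key : ∀ n ∈ range (k + k),
        |(∑ t ∈ range (n + 1), gID (k + k) t) - ∑ t ∈ range (n + 1), gUN (k + k) t|
          = (-(1 : ℝ) / 2) * (n : ℝ) ^ 2 + ((((k + k : ℕ) : ℝ) - 2) / 2) * (n : ℝ)
            + (((k + k : ℕ) : ℝ) - 1) / 2 := by
      intro n hn
      have hn' : (n : ℝ) + 1 ≤ ((k + k : ℕ) : ℝ) := by
        exact_mod_cast Finset.mem_range.1 hn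
      rw [pID, pUN]
      have h1 : ((n : ℝ) + 1) * (((k + k : ℕ) : ℝ) - 1) - (n : ℝ) * ((n : ℝ) + 1) / 2
          - ((n : ℝ) + 1) * (((k + k : ℕ) : ℝ) - 1) / 2
          = ((n : ℝ) + 1) * (((k + k : ℕ) : ℝ) - 1 - n) / 2 := by ring
      rw [h1, abs_of_nonneg (by
        apply div_nonneg _ (by norm_num)
        apply mul_nonneg (by positivity)
        linarith)]
      ring
    rw [Finset.sum_congr rfl key, sum_quad]
    push_cast
    ring
  · -- UN vs ST
    rw [dBorda_eq' _ _ (gUN (k + k)) (gST (k + k) k) hxUN hxST]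
    rw [Finset.sum_range_add]
    have key1 : ∀ n ∈ range k,
        |(∑ t ∈ range (n + 1), gUN (k + k) t) - ∑ t ∈ range (n + 1), gST (k + k) k t|
          = (0 : ℝ) * (n : ℝ) ^ 2 + ((((k + k : ℕ) : ℝ) - 1) / 4) * (n : ℝ)
            + (((k + k : ℕ) : ℝ) - 1) / 4 := by
      intro n hn
      rw [pUN, pSTlow _ _ _ (Finset.mem_range.1 hn)]
      have h1 : ((n : ℝ) + 1) * (((k + k : ℕ) : ℝ) - 1) / 2
          - ((n : ℝ) + 1) * (3 * (((k + k : ℕ) : ℝ) - 1) / 4)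
          = -(((n : ℝ) + 1) * (((k + k : ℕ) : ℝ) - 1) / 4) := by ring
      rw [h1, abs_neg, abs_of_nonneg (by
        apply div_nonneg _ (by norm_num)
        apply mul_nonneg (by positivity)
        linarith)]
      ring
    have key2 : ∀ n ∈ range k,
        |(∑ t ∈ range (k + n + 1), gUN (k + k) t) - ∑ t ∈ range (k + n + 1), gST (k + k) k t|
          = (0 : ℝ) * (n : ℝ) ^ 2 + (-((((k + k : ℕ) : ℝ) - 1) / 4)) * (n : ℝ)
            + (((k + k : ℕ) : ℝ) - 1) * ((k : ℝ) - 1) / 4 := by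
      intro n hn
      have hn' : (n : ℝ) + 1 ≤ (k : ℝ) := by exact_mod_cast Finset.mem_range.1 hn
      rw [pUN, pSThigh]
      have hcast : ((k + n : ℕ) : ℝ) = (k : ℝ) + n := by push_cast; ring
      rw [hcast]
      have h1 : ((k : ℝ) + n + 1) * (((k + k : ℕ) : ℝ) - 1) / 2
          - ((k : ℝ) * (3 * (((k + k : ℕ) : ℝ) - 1) / 4)
            + ((n : ℝ) + 1) * ((((k + k : ℕ) : ℝ) - 1) / 4))
          = -((((k + k : ℕ) : ℝ) - 1) * ((k : ℝ) - 1 - n) / 4) := by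
        rw [hC2]; ring
      rw [h1, abs_neg, abs_of_nonneg (by
        apply div_nonneg _ (by norm_num)
        apply mul_nonneg (by linarith) (by linarith))]
      ring
    rw [Finset.sum_congr rfl key1, Finset.sum_congr rfl key2, sum_quad, sum_quad]
    push_cast
    ring
  · -- ID vs ST
    rw [dBorda_eq' _ _ (gID (k + k)) (gST (k + k) k) hxID hxST]
    rw [Finset.sum_range_add]
    have key1 : ∀ n ∈ range k,
        |(∑ t ∈ range (n + 1), gID (k + k) t) - ∑ t ∈ range (n + 1), gST (k + k) k t|
          = (-(1 : ℝ) / 2) * (n : ℝ) ^ 2 + ((((k + k : ℕ) : ℝ) - 3) / 4) * (n : ℝ)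
            + (((k + k : ℕ) : ℝ) - 1) / 4 := by
      intro n hn
      have hn' : (n : ℝ) + 1 ≤ (k : ℝ) := by exact_mod_cast Finset.mem_range.1 hn
      rw [pID, pSTlow _ _ _ (Finset.mem_range.1 hn)]
      have h1 : ((n : ℝ) + 1) * (((k + k : ℕ) : ℝ) - 1) - (n : ℝ) * ((n : ℝ) + 1) / 2
          - ((n : ℝ) + 1) * (3 * (((k + k : ℕ) : ℝ) - 1) / 4)
          = ((n : ℝ) + 1) * ((((k + k : ℕ) : ℝ) - 1 - 2 * n) / 4) := by ring
      rw [h1, abs_of_nonneg (by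
        apply mul_nonneg (by positivity)
        apply div_nonneg _ (by norm_num)
        rw [hC2]; linarith)]
      ring
    have key2 : ∀ n ∈ range k,
        |(∑ t ∈ range (k + n + 1), gID (k + k) t) - ∑ t ∈ range (k + n + 1), gST (k + k) k t|
          = (-(1 : ℝ) / 2) * (n : ℝ) ^ 2 + ((2 * (k : ℝ) - 5) / 4) * (n : ℝ)
            + (3 * (k : ℝ) - 3) / 4 := by
      intro n hn
      have hn' : (n : ℝ) + 1 ≤ (k : ℝ) := by exact_mod_cast Finset.mem_range.1 hn
      rw [pID, pSThigh]
      have hcast : ((k + n : ℕ) : ℝ) = (k : ℝ) + n := by push_cast; ring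
      rw [hcast]
      have h1 : ((k : ℝ) + n + 1) * (((k + k : ℕ) : ℝ) - 1)
          - ((k : ℝ) + n) * ((k : ℝ) + n + 1) / 2
          - ((k : ℝ) * (3 * (((k + k : ℕ) : ℝ) - 1) / 4)
            + ((n : ℝ) + 1) * ((((k + k : ℕ) : ℝ) - 1) / 4))
          = ((k : ℝ) - 1 - n) * (2 * (n : ℝ) + 3) / 4 := by
        rw [hC2]; ring
      rw [h1, abs_of_nonneg (by
        apply div_nonneg _ (by norm_num)
        apply mul_nonneg (by linarith) (by positivity))]
      ring
    rw [Finset.sum_congr rfl key1, Finset.sum_congr rfl key2, sum_quad, sum_quad]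
    push_cast
    ring

end
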